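/- Let φ, φ̃ : M → N be two smooth maps with corresponding local variables u_j, v_j, A_j and ũ_j, ṽ_j, Ã_j, and let 0 ≤ j ≤ k−3. Then on any open set D whose closure is compact and contained in the chart domain, there exists a constant C > 0 such that |(u_{j+1} − A_{j+1}) − (ũ_{j+1} − Ã_{j+1})| ≤ C( |φ − φ̃| + |dφ − dφ̃| + |u₀ − ũ₀| + |u_j − ũ_j| + |u_{j+1} − ũ_{j+1}| + |v_j − ṽ_j| ). -/

import Mathlib

noncomputable section

open scoped BigOperators

namespace Polyharm

/-- Partial derivative of a scalar function on `ℝ^d` in the `i`-th coordinate direction. -/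
def pd {d : ℕ} (i : Fin d) (f : (Fin d → ℝ) → ℝ) (x : Fin d → ℝ) : ℝ :=
  fderiv ℝ f x (Pi.single i 1)

/-- Euclidean norm of a finite family of real numbers. -/
def vnorm {ι : Type} [Fintype ι] (f : ι → ℝ) : ℝ :=
  Real.sqrt (∑ i, f i ^ 2)

/-- Local-coordinate data for maps between Riemannian manifolds: the inverse metric
`g^{ij}` and the Christoffel symbols `Γ^k_{ij}` of a chart of the domain `(M,g)`, and
the Christoffel symbols `Γ^α_{βγ}` of a chart of the target `(N,h)`. -/
structure ChartData (m n : ℕ) where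
  ginv : (Fin m → ℝ) → Fin m → Fin m → ℝ
  ΓM : (Fin m → ℝ) → Fin m → Fin m → Fin m → ℝ
  ΓN : (Fin n → ℝ) → Fin n → Fin n → Fin n → ℝ

variable {m n : ℕ}

/-- Smoothness of the domain data. -/
def ChartData.SmoothDomain (P : ChartData m n) : Prop :=
  (∀ i j, ContDiff ℝ (⊤ : ℕ∞) fun x => P.ginv x i j) ∧
  (∀ k i j, ContDiff ℝ (⊤ : ℕ∞) fun x => P.ΓM x k i j)

/-- Smoothness of the target Christoffel symbols. -/
def ChartData.SmoothTarget (P : ChartData m n) : Prop :=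
  ∀ α β γ, ContDiff ℝ (⊤ : ℕ∞) fun y => P.ΓN y α β γ

/-- The chart data comes from Riemannian metrics: `g^{ij}` is symmetric and positive
definite, and the Christoffel symbols are symmetric in their lower indices. -/
def ChartData.Riemannian (P : ChartData m n) : Prop :=
  (∀ x i j, P.ginv x i j = P.ginv x j i) ∧
  (∀ x (v : Fin m → ℝ), v ≠ 0 → 0 < ∑ i, ∑ j, P.ginv x i j * v i * v j) ∧
  (∀ x k i j, P.ΓM x k i j = P.ΓM x k j i) ∧
  (∀ y α β γ, P.ΓN y α β γ = P.ΓN y α γ β)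

/-- The Laplace–Beltrami operator on scalar functions:
`-Δ f = g^{ij} ∂²f/∂x^i∂x^j - g^{ij} Γ^k_{ij} ∂f/∂x^k`. -/
def lap (P : ChartData m n) (f : (Fin m → ℝ) → ℝ) (x : Fin m → ℝ) : ℝ :=
  -((∑ i, ∑ j, P.ginv x i j * pd i (fun z => pd j f z) x)
    - ∑ i, ∑ j, ∑ k, P.ginv x i j * P.ΓM x k i j * pd k f x)

/-- `φ_i^β = ∂φ^β/∂x^i`. -/
def dphi (φ : (Fin m → ℝ) → Fin n → ℝ) (x : Fin m → ℝ) (i : Fin m) (β : Fin n) : ℝ :=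
  pd i (fun z => φ z β) x

/-- `⟨dφ^β, dψ^γ⟩ = g^{ij} φ_i^β ψ_j^γ`. -/
def dpair (P : ChartData m n) (φ ψ : (Fin m → ℝ) → Fin n → ℝ) (x : Fin m → ℝ)
    (β γ : Fin n) : ℝ :=
  ∑ i, ∑ j, P.ginv x i j * dphi φ x i β * dphi ψ x j γ

/-- Components `R^α_{δβγ}` of the curvature tensor of the target, with the sign
convention `R(∂/∂y^β, ∂/∂y^γ)∂/∂y^δ = R^α_{δβγ} ∂/∂y^α` of the paper. -/
def Rc (P : ChartData m n) (y : Fin n → ℝ) (α δ β γ : Fin n) : ℝ :=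
  pd β (fun z => P.ΓN z α γ δ) y - pd γ (fun z => P.ΓN z α β δ) y
    + ∑ μ, (P.ΓN y α β μ * P.ΓN y μ γ δ - P.ΓN y α γ μ * P.ΓN y μ β δ)

/-- `2S^α_{βωϑ} = ∂Γ^α_{βϑ}/∂y^ω + Γ^γ_{βϑ}Γ^α_{ωγ} + ∂Γ^α_{ωϑ}/∂y^β + Γ^γ_{ωϑ}Γ^α_{βγ}`. -/
def Scoef (P : ChartData m n) (y : Fin n → ℝ) (α β ω ϑ : Fin n) : ℝ :=
  (pd ω (fun z => P.ΓN z α β ϑ) y + (∑ γ, P.ΓN y γ β ϑ * P.ΓN y α ω γ)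
    + pd β (fun z => P.ΓN z α ω ϑ) y + ∑ γ, P.ΓN y γ ω ϑ * P.ΓN y α β γ) / 2

/-- The operator
`A^α(η,ξ) = ξ_i^ϑ(-2 g^{ij} φ_j^β Γ^α_{βϑ}) + η^ϑ((Δφ^β)Γ^α_{βϑ} - g^{ij} φ_j^β φ_i^ω S^α_{βωϑ})`. -/
def Aop (P : ChartData m n) (φ : (Fin m → ℝ) → Fin n → ℝ) (η : Fin n → ℝ)
    (ξ : Fin m → Fin n → ℝ) (x : Fin m → ℝ) (α : Fin n) : ℝ :=
  (∑ ϑ, ∑ i, ξ i ϑ * (-2 * ∑ j, ∑ β, P.ginv x i j * dphi φ x j β * P.ΓN (φ x) α β ϑ))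
    + ∑ ϑ, η ϑ * ((∑ β, lap P (fun z => φ z β) x * P.ΓN (φ x) α β ϑ)
        - ∑ i, ∑ j, ∑ β, ∑ ω,
            P.ginv x i j * dphi φ x j β * dphi φ x i ω * Scoef P (φ x) α β ω ϑ)

/-- The operator `A` applied to (the components of) a section `σ` of `φ⁻¹TN`:
`A(σ, ∂σ)`. -/
def Asec (P : ChartData m n) (φ σ : (Fin m → ℝ) → Fin n → ℝ) (x : Fin m → ℝ)
    (α : Fin n) : ℝ :=
  Aop P φ (σ x) (fun i ϑ => pd i (fun z => σ z ϑ) x) x α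

/-- Components of the tension field `τ^α(φ) = -Δφ^α + g^{ij} Γ^α_{ϑβ} φ_i^ϑ φ_j^β`. -/
def tension (P : ChartData m n) (φ : (Fin m → ℝ) → Fin n → ℝ) (x : Fin m → ℝ)
    (α : Fin n) : ℝ :=
  -(lap P (fun z => φ z α) x)
    + ∑ i, ∑ j, ∑ ϑ, ∑ β,
        P.ginv x i j * P.ΓN (φ x) α ϑ β * dphi φ x i ϑ * dphi φ x j β

/-- The components `u_j` of `Δ̄^j τ(φ)`: `u_0 = τ(φ)` and
`u_{j+1} = Δ u_j + A(u_j, ∂u_j)` (local expression of the rough Laplacian). -/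
def uvar (P : ChartData m n) (φ : (Fin m → ℝ) → Fin n → ℝ) :
    ℕ → (Fin m → ℝ) → Fin n → ℝ
  | 0 => tension P φ
  | j+1 => fun x α => lap P (fun z => uvar P φ j z α) x + Asec P φ (uvar P φ j) x α

/-- `v_j = du_j`, i.e. `v_{j i}^α = ∂u_j^α/∂x^i`. -/
def vvar (P : ChartData m n) (φ : (Fin m → ℝ) → Fin n → ℝ) (j : ℕ) (x : Fin m → ℝ)
    (i : Fin m) (α : Fin n) : ℝ :=
  pd i (fun z => uvar P φ j z α) x

/-- Components of the pull-back covariant derivative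
`(∇̄_{∂_i} σ)^γ = ∂σ^γ/∂x^i + Γ^γ_{βδ}(φ) φ_i^β σ^δ`. -/
def covD (P : ChartData m n) (φ σ : (Fin m → ℝ) → Fin n → ℝ) (i : Fin m)
    (x : Fin m → ℝ) (γ : Fin n) : ℝ :=
  pd i (fun z => σ z γ) x + ∑ β, ∑ δ, P.ΓN (φ x) γ β δ * dphi φ x i β * σ x δ

/-- `(Tr_g R^N(X, dφ(·))dφ(·))^α`. -/
def trRphi (P : ChartData m n) (φ X : (Fin m → ℝ) → Fin n → ℝ) (x : Fin m → ℝ)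
    (α : Fin n) : ℝ :=
  ∑ i, ∑ j, ∑ β, ∑ γ, ∑ δ,
    P.ginv x i j * Rc P (φ x) α δ β γ * X x β * dphi φ x i γ * dphi φ x j δ

/-- `(Tr_g R^N(dφ(·), X)dφ(·))^α`. -/
def trRphi2 (P : ChartData m n) (φ X : (Fin m → ℝ) → Fin n → ℝ) (x : Fin m → ℝ)
    (α : Fin n) : ℝ :=
  ∑ i, ∑ j, ∑ β, ∑ γ, ∑ δ,
    P.ginv x i j * Rc P (φ x) α δ β γ * dphi φ x i β * X x γ * dphi φ x j δ

/-- `(Tr_g R^N(∇̄_{(·)}W, Z)dφ(·))^α`. -/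
def trRD (P : ChartData m n) (φ W Z : (Fin m → ℝ) → Fin n → ℝ) (x : Fin m → ℝ)
    (α : Fin n) : ℝ :=
  ∑ i, ∑ j, ∑ β, ∑ γ, ∑ δ,
    P.ginv x i j * Rc P (φ x) α δ β γ * covD P φ W i x β * Z x γ * dphi φ x j δ

/-- `(Tr_g R^N(W, ∇̄_{(·)}Z)dφ(·))^α`. -/
def trRD2 (P : ChartData m n) (φ W Z : (Fin m → ℝ) → Fin n → ℝ) (x : Fin m → ℝ)
    (α : Fin n) : ℝ :=
  ∑ i, ∑ j, ∑ β, ∑ γ, ∑ δ,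
    P.ginv x i j * Rc P (φ x) α δ β γ * W x β * covD P φ Z i x γ * dphi φ x j δ

/-- Local components of Maeta's `k`-tension field `τ_k(φ)`, for `k = 2s`:
`τ_{2s}(φ) = Δ̄^{2s-1}τ(φ) - R^N(Δ̄^{2s-2}τ(φ), dφ(e_j))dφ(e_j)
  - Σ_{ℓ=1}^{s-1}( R^N(∇̄_{e_j}Δ̄^{s+ℓ-2}τ(φ), Δ̄^{s-ℓ-1}τ(φ))dφ(e_j)
                 - R^N(Δ̄^{s+ℓ-2}τ(φ), ∇̄_{e_j}Δ̄^{s-ℓ-1}τ(φ))dφ(e_j) )`,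
and for `k = 2s+1`:
`τ_{2s+1}(φ) = Δ̄^{2s}τ(φ) - R^N(Δ̄^{2s-1}τ(φ), dφ(e_j))dφ(e_j)
  - Σ_{ℓ=1}^{s-1}( R^N(∇̄_{e_j}Δ̄^{s+ℓ-1}τ(φ), Δ̄^{s-ℓ-1}τ(φ))dφ(e_j)
                 - R^N(Δ̄^{s+ℓ-1}τ(φ), ∇̄_{e_j}Δ̄^{s-ℓ-1}τ(φ))dφ(e_j) )
  - R^N(∇̄_{e_j}Δ̄^{s-1}τ(φ), Δ̄^{s-1}τ(φ))dφ(e_j)`. -/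
def tauK (P : ChartData m n) (φ : (Fin m → ℝ) → Fin n → ℝ) (k : ℕ) (x : Fin m → ℝ)
    (α : Fin n) : ℝ :=
  if Even k then
    uvar P φ (k-1) x α - trRphi P φ (uvar P φ (k-2)) x α
      - ∑ ℓ ∈ Finset.Icc 1 (k/2 - 1),
          (trRD P φ (uvar P φ (k/2 + ℓ - 2)) (uvar P φ (k/2 - ℓ - 1)) x α
            - trRD2 P φ (uvar P φ (k/2 + ℓ - 2)) (uvar P φ (k/2 - ℓ - 1)) x α)
  else
    uvar P φ (k-1) x α - trRphi P φ (uvar P φ (k-2)) x α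
      - (∑ ℓ ∈ Finset.Icc 1 (k/2 - 1),
          (trRD P φ (uvar P φ (k/2 + ℓ - 1)) (uvar P φ (k/2 - ℓ - 1)) x α
            - trRD2 P φ (uvar P φ (k/2 + ℓ - 1)) (uvar P φ (k/2 - ℓ - 1)) x α))
      - trRD P φ (uvar P φ (k/2 - 1)) (uvar P φ (k/2 - 1)) x α

/-- Components `(∇dφ)(∂_i,∂_j)^α` of the second fundamental form of `φ`. -/
def sff (P : ChartData m n) (φ : (Fin m → ℝ) → Fin n → ℝ) (x : Fin m → ℝ)
    (i j : Fin m) (α : Fin n) : ℝ :=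
  pd i (fun z => dphi φ z j α) x - (∑ k, P.ΓM x k i j * dphi φ x k α)
    + ∑ β, ∑ γ, P.ΓN (φ x) α β γ * dphi φ x i β * dphi φ x j γ

/-!
Since `Δφ^β = g^{ij} Γ^β_{ϑγ} φ_i^ϑ φ_j^γ - u₀^β`, the term `A_{j+1} = A(u_j, du_j)` is a smooth
function of the first-order data `(x, φ, dφ, u₀, u_j, v_j)`, and hence `u_{j+1} - A_{j+1}` is a
smooth function `uSubA` of `(x, φ, dφ, u₀, u_j, u_{j+1}, v_j)`. Over the compact set `closure D`
these data of `φ` and of `φ̃` stay in a compact set, on which the `C¹` map `uSubA` is Lipschitz.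
-/

end Polyharm

open scoped NNReal

theorem IsCompact.exists_norm_comp_sub_comp_le {X E F : Type*} [TopologicalSpace X]
    [NormedAddCommGroup E] [NormedSpace ℝ E] [NormedAddCommGroup F] [NormedSpace ℝ F]
    {K : Set X} (hK : IsCompact K) {G : E → F} (hG : ContDiff ℝ 1 G) {f g : X → E}
    (hf : Continuous f) (hg : Continuous g) :
    ∃ L : ℝ≥0, ∀ x ∈ K, ‖G (f x) - G (g x)‖ ≤ L * ‖f x - g x‖ := by
  obtain ⟨L, hL⟩ := hG.locallyLipschitz.locallyLipschitzOn.exists_lipschitzOnWith_of_compact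
    ((hK.image hf).union (hK.image hg))
  refine ⟨L, fun x hx => ?_⟩
  simpa only [dist_eq_norm] using
    hL.dist_le_mul (f x) (Or.inl ⟨x, hx, rfl⟩) (g x) (Or.inr ⟨x, hx, rfl⟩)

namespace Polyharm

theorem vnorm_eq_norm_toLp {ι : Type} [Fintype ι] (f : ι → ℝ) :
    vnorm f = ‖WithLp.toLp 2 f‖ := by
  simp only [vnorm, EuclideanSpace.norm_eq, Real.norm_eq_abs, sq_abs]

theorem abs_le_vnorm {ι : Type} [Fintype ι] (f : ι → ℝ) (i : ι) : |f i| ≤ vnorm f := by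
  rw [← Real.sqrt_sq_eq_abs]
  exact Real.sqrt_le_sqrt (Finset.single_le_sum (fun j _ => sq_nonneg (f j)) (Finset.mem_univ i))

theorem norm_sub_le_vnorm {ι : Type} [Fintype ι] (f g : ι → ℝ) :
    ‖f - g‖ ≤ vnorm (fun i => f i - g i) :=
  (pi_norm_le_iff_of_nonneg (Real.sqrt_nonneg _)).2 fun i => abs_le_vnorm _ i

theorem norm_sub_le_vnorm_uncurry {ι κ : Type} [Fintype ι] [Fintype κ] (f g : ι → κ → ℝ) :
    ‖f - g‖ ≤ vnorm (fun q : ι × κ => f q.1 q.2 - g q.1 q.2) :=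
  (pi_norm_le_iff_of_nonneg (Real.sqrt_nonneg _)).2 fun i =>
    (pi_norm_le_iff_of_nonneg (Real.sqrt_nonneg _)).2 fun k =>
      abs_le_vnorm (fun q : ι × κ => f q.1 q.2 - g q.1 q.2) (i, k)

theorem contDiff_pd {d : ℕ} {f : (Fin d → ℝ) → ℝ} (hf : ContDiff ℝ (⊤ : ℕ∞) f) (i : Fin d) :
    ContDiff ℝ (⊤ : ℕ∞) (pd i f) :=
  (hf.fderiv_right (by simp)).clm_apply contDiff_const

variable {m n : ℕ} {P : ChartData m n}

theorem contDiff_partials {σ : (Fin m → ℝ) → Fin n → ℝ} (hσ : ContDiff ℝ (⊤ : ℕ∞) σ) :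
    ContDiff ℝ (⊤ : ℕ∞) fun x i α => pd i (fun z => σ z α) x :=
  contDiff_pi.2 fun i => contDiff_pi.2 fun α => contDiff_pd (contDiff_pi.1 hσ α) i

theorem contDiff_lap (hP : P.SmoothDomain) {f : (Fin m → ℝ) → ℝ}
    (hf : ContDiff ℝ (⊤ : ℕ∞) f) : ContDiff ℝ (⊤ : ℕ∞) (lap P f) := by
  have hg : ∀ i j, ContDiff ℝ (⊤ : ℕ∞) fun x => P.ginv x i j := hP.1
  have hΓ : ∀ k i j, ContDiff ℝ (⊤ : ℕ∞) fun x => P.ΓM x k i j := hP.2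
  have hdf : ∀ k, ContDiff ℝ (⊤ : ℕ∞) fun x => pd k f x := contDiff_pd hf
  have hddf : ∀ i j, ContDiff ℝ (⊤ : ℕ∞) fun x => pd i (fun z => pd j f z) x :=
    fun i j => contDiff_pd (contDiff_pd hf j) i
  unfold lap
  fun_prop

theorem contDiff_lap_pi (hP : P.SmoothDomain) {σ : (Fin m → ℝ) → Fin n → ℝ}
    (hσ : ContDiff ℝ (⊤ : ℕ∞) σ) : ContDiff ℝ (⊤ : ℕ∞) fun x α => lap P (fun z => σ z α) x :=
  contDiff_pi.2 fun α => contDiff_lap hP (contDiff_pi.1 hσ α)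

theorem contDiff_Scoef (hP : P.SmoothTarget) (α β ω ϑ : Fin n) :
    ContDiff ℝ (⊤ : ℕ∞) fun y => Scoef P y α β ω ϑ := by
  have hΓ : ∀ a b c, ContDiff ℝ (⊤ : ℕ∞) fun y => P.ΓN y a b c := hP
  have hdΓ : ∀ a b c i, ContDiff ℝ (⊤ : ℕ∞) fun y => pd i (fun z => P.ΓN z a b c) y :=
    fun a b c i => contDiff_pd (hP a b c) i
  unfold Scoef
  fun_prop

def tensionQuad (P : ChartData m n) (x : Fin m → ℝ) (y : Fin n → ℝ) (p : Fin m → Fin n → ℝ)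
    (α : Fin n) : ℝ :=
  ∑ i, ∑ j, ∑ ϑ, ∑ β, P.ginv x i j * P.ΓN y α ϑ β * p i ϑ * p j β

/-- `A^α(η, ξ)` at `x`, as a function of the values `y = φ(x)`, `p = dφ(x)`, `l = Δφ(x)`. -/
def Apoint (P : ChartData m n) (x : Fin m → ℝ) (y : Fin n → ℝ) (p : Fin m → Fin n → ℝ)
    (l η : Fin n → ℝ) (ξ : Fin m → Fin n → ℝ) (α : Fin n) : ℝ :=
  (∑ ϑ, ∑ i, ξ i ϑ * (-2 * ∑ j, ∑ β, P.ginv x i j * p j β * P.ΓN y α β ϑ))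
    + ∑ ϑ, η ϑ * ((∑ β, l β * P.ΓN y α β ϑ)
        - ∑ i, ∑ j, ∑ β, ∑ ω, P.ginv x i j * p j β * p i ω * Scoef P y α β ω ϑ)

theorem Asec_eq_Apoint (φ σ : (Fin m → ℝ) → Fin n → ℝ) (x : Fin m → ℝ) :
    Asec P φ σ x = Apoint P x (φ x) (dphi φ x) (fun β => lap P (fun z => φ z β) x) (σ x)
      (fun i ϑ => pd i (fun z => σ z ϑ) x) :=
  rfl

theorem uvar_zero_eq (φ : (Fin m → ℝ) → Fin n → ℝ) :
    uvar P φ 0 =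
      fun x => tensionQuad P x (φ x) (dphi φ x) - fun β => lap P (fun z => φ z β) x := by
  funext x β
  simp only [Pi.sub_apply, uvar, tension, tensionQuad]
  ring

variable {E : Type*} [NormedAddCommGroup E] [NormedSpace ℝ E]

theorem contDiff_tensionQuad (hPdom : P.SmoothDomain) (hPtar : P.SmoothTarget)
    {x : E → Fin m → ℝ} {y : E → Fin n → ℝ} {p : E → Fin m → Fin n → ℝ}
    (hx : ContDiff ℝ (⊤ : ℕ∞) x) (hy : ContDiff ℝ (⊤ : ℕ∞) y) (hp : ContDiff ℝ (⊤ : ℕ∞) p) :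
    ContDiff ℝ (⊤ : ℕ∞) fun w => tensionQuad P (x w) (y w) (p w) := by
  have hg : ∀ i j, ContDiff ℝ (⊤ : ℕ∞) fun x => P.ginv x i j := hPdom.1
  have hΓ : ∀ a b c, ContDiff ℝ (⊤ : ℕ∞) fun y => P.ΓN y a b c := hPtar
  unfold tensionQuad
  fun_prop

theorem contDiff_Apoint (hPdom : P.SmoothDomain) (hPtar : P.SmoothTarget)
    {x : E → Fin m → ℝ} {y : E → Fin n → ℝ} {p ξ : E → Fin m → Fin n → ℝ} {l η : E → Fin n → ℝ}
    (hx : ContDiff ℝ (⊤ : ℕ∞) x) (hy : ContDiff ℝ (⊤ : ℕ∞) y) (hp : ContDiff ℝ (⊤ : ℕ∞) p)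
    (hl : ContDiff ℝ (⊤ : ℕ∞) l) (hη : ContDiff ℝ (⊤ : ℕ∞) η) (hξ : ContDiff ℝ (⊤ : ℕ∞) ξ) :
    ContDiff ℝ (⊤ : ℕ∞) fun w => Apoint P (x w) (y w) (p w) (l w) (η w) (ξ w) := by
  have hg : ∀ i j, ContDiff ℝ (⊤ : ℕ∞) fun x => P.ginv x i j := hPdom.1
  have hΓ : ∀ a b c, ContDiff ℝ (⊤ : ℕ∞) fun y => P.ΓN y a b c := hPtar
  have hS : ∀ a b c d, ContDiff ℝ (⊤ : ℕ∞) fun y => Scoef P y a b c d := contDiff_Scoef hPtar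
  unfold Apoint
  fun_prop

theorem contDiff_uvar (hPdom : P.SmoothDomain) (hPtar : P.SmoothTarget)
    {φ : (Fin m → ℝ) → Fin n → ℝ} (hφ : ContDiff ℝ (⊤ : ℕ∞) φ) (j : ℕ) :
    ContDiff ℝ (⊤ : ℕ∞) (uvar P φ j) := by
  induction j with
  | zero =>
    rw [uvar_zero_eq]
    exact (contDiff_tensionQuad hPdom hPtar contDiff_id hφ (contDiff_partials hφ)).sub
      (contDiff_lap_pi hPdom hφ)
  | succ j ih =>
    exact (contDiff_lap_pi hPdom ih).add (contDiff_Apoint hPdom hPtar contDiff_id hφ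
      (contDiff_partials hφ) (contDiff_lap_pi hPdom hφ) ih (contDiff_partials ih))

abbrev Jet (m n : ℕ) : Type :=
  (Fin m → ℝ) × (Fin n → ℝ) × (Fin m → Fin n → ℝ) × (Fin n → ℝ) × (Fin n → ℝ) × (Fin n → ℝ)
    × (Fin m → Fin n → ℝ)

def jet (P : ChartData m n) (φ : (Fin m → ℝ) → Fin n → ℝ) (j : ℕ) (x : Fin m → ℝ) :
    Jet m n :=
  (x, φ x, dphi φ x, uvar P φ 0 x, uvar P φ j x, uvar P φ (j + 1) x, vvar P φ j x)

def uSubA (P : ChartData m n) : Jet m n → EuclideanSpace ℝ (Fin n)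
  | (x, y, p, t, u, u', ξ) => WithLp.toLp 2 (u' - Apoint P x y p (tensionQuad P x y p - t) u ξ)

theorem uSubA_jet (φ : (Fin m → ℝ) → Fin n → ℝ) (j : ℕ) (x : Fin m → ℝ) :
    uSubA P (jet P φ j x) = WithLp.toLp 2 (uvar P φ (j + 1) x - Asec P φ (uvar P φ j) x) := by
  simp only [uSubA, jet, Asec_eq_Apoint, uvar_zero_eq, sub_sub_cancel]
  rfl

theorem contDiff_uSubA (hPdom : P.SmoothDomain) (hPtar : P.SmoothTarget) :
    ContDiff ℝ (⊤ : ℕ∞) (uSubA P) := by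
  show ContDiff ℝ _ fun z : Jet m n => WithLp.toLp 2 (z.2.2.2.2.2.1 - Apoint P z.1 z.2.1 z.2.2.1
    (tensionQuad P z.1 z.2.1 z.2.2.1 - z.2.2.2.1) z.2.2.2.2.1 z.2.2.2.2.2.2)
  have hx : ContDiff ℝ (⊤ : ℕ∞) fun z : Jet m n => z.1 := by fun_prop
  have hy : ContDiff ℝ (⊤ : ℕ∞) fun z : Jet m n => z.2.1 := by fun_prop
  have hp : ContDiff ℝ (⊤ : ℕ∞) fun z : Jet m n => z.2.2.1 := by fun_prop
  have ht : ContDiff ℝ (⊤ : ℕ∞) fun z : Jet m n => z.2.2.2.1 := by fun_prop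
  have hu : ContDiff ℝ (⊤ : ℕ∞) fun z : Jet m n => z.2.2.2.2.1 := by fun_prop
  have hu' : ContDiff ℝ (⊤ : ℕ∞) fun z : Jet m n => z.2.2.2.2.2.1 := by fun_prop
  have hξ : ContDiff ℝ (⊤ : ℕ∞) fun z : Jet m n => z.2.2.2.2.2.2 := by fun_prop
  exact PiLp.contDiff_toLp.comp (hu'.sub (contDiff_Apoint hPdom hPtar hx hy hp
    ((contDiff_tensionQuad hPdom hPtar hx hy hp).sub ht) hu hξ))

theorem contDiff_jet (hPdom : P.SmoothDomain) (hPtar : P.SmoothTarget)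
    {φ : (Fin m → ℝ) → Fin n → ℝ} (hφ : ContDiff ℝ (⊤ : ℕ∞) φ) (j : ℕ) :
    ContDiff ℝ (⊤ : ℕ∞) (jet P φ j) :=
  contDiff_id.prodMk <| hφ.prodMk <| (contDiff_partials hφ).prodMk <|
    (contDiff_uvar hPdom hPtar hφ 0).prodMk <| (contDiff_uvar hPdom hPtar hφ j).prodMk <|
      (contDiff_uvar hPdom hPtar hφ (j + 1)).prodMk
        (contDiff_partials (contDiff_uvar hPdom hPtar hφ j))

theorem norm_jet_sub_le (φ ψ : (Fin m → ℝ) → Fin n → ℝ) (j : ℕ) (x : Fin m → ℝ) :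
    ‖jet P φ j x - jet P ψ j x‖ ≤
      vnorm (fun α : Fin n => φ x α - ψ x α)
        + vnorm (fun p : Fin m × Fin n => dphi φ x p.1 p.2 - dphi ψ x p.1 p.2)
        + vnorm (fun α : Fin n => uvar P φ 0 x α - uvar P ψ 0 x α)
        + vnorm (fun α : Fin n => uvar P φ j x α - uvar P ψ j x α)
        + vnorm (fun α : Fin n => uvar P φ (j+1) x α - uvar P ψ (j+1) x α)
        + vnorm (fun p : Fin m × Fin n => vvar P φ j x p.1 p.2 - vvar P ψ j x p.1 p.2) := by
  have h1 := norm_sub_le_vnorm (φ x) (ψ x)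
  have h2 := norm_sub_le_vnorm_uncurry (dphi φ x) (dphi ψ x)
  have h3 := norm_sub_le_vnorm (uvar P φ 0 x) (uvar P ψ 0 x)
  have h4 := norm_sub_le_vnorm (uvar P φ j x) (uvar P ψ j x)
  have h5 := norm_sub_le_vnorm (uvar P φ (j + 1) x) (uvar P ψ (j + 1) x)
  have h6 := norm_sub_le_vnorm_uncurry (vvar P φ j x) (vvar P ψ j x)
  have := (norm_nonneg _).trans h1
  have := (norm_nonneg _).trans h2
  have := (norm_nonneg _).trans h3
  have := (norm_nonneg _).trans h4
  have := (norm_nonneg _).trans h5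
  have := (norm_nonneg _).trans h6
  simp only [jet, Prod.mk_sub_mk, norm_prod_le_iff, sub_self, norm_zero]
  refine ⟨?_, ?_, ?_, ?_, ?_, ?_, ?_⟩ <;> linarith

theorem estimate_u_minus_A_difference_general
    {m n : ℕ} (P : ChartData m n)
    (hPdom : P.SmoothDomain) (hPtar : P.SmoothTarget)
    (φ ψ : (Fin m → ℝ) → Fin n → ℝ)
    (hφ : ContDiff ℝ (⊤ : ℕ∞) φ) (hψ : ContDiff ℝ (⊤ : ℕ∞) ψ)
    (j : ℕ)
    (D : Set (Fin m → ℝ)) (hDcpt : IsCompact (closure D)) :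
    ∃ C > 0, ∀ x ∈ D,
      vnorm (fun α : Fin n =>
          (uvar P φ (j+1) x α - Asec P φ (uvar P φ j) x α)
            - (uvar P ψ (j+1) x α - Asec P ψ (uvar P ψ j) x α))
        ≤ C * (vnorm (fun α : Fin n => φ x α - ψ x α)
          + vnorm (fun p : Fin m × Fin n => dphi φ x p.1 p.2 - dphi ψ x p.1 p.2)
          + vnorm (fun α : Fin n => uvar P φ 0 x α - uvar P ψ 0 x α)
          + vnorm (fun α : Fin n => uvar P φ j x α - uvar P ψ j x α)
          + vnorm (fun α : Fin n => uvar P φ (j+1) x α - uvar P ψ (j+1) x α)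
          + vnorm (fun p : Fin m × Fin n => vvar P φ j x p.1 p.2 - vvar P ψ j x p.1 p.2)) := by
  obtain ⟨L, hL⟩ := hDcpt.exists_norm_comp_sub_comp_le
    ((contDiff_uSubA hPdom hPtar).of_le (by exact_mod_cast le_top))
    (contDiff_jet hPdom hPtar hφ j).continuous (contDiff_jet hPdom hPtar hψ j).continuous
  refine ⟨L + 1, by positivity, fun x hx => ?_⟩
  have hjet := norm_jet_sub_le (P := P) φ ψ j x
  calc _ = ‖uSubA P (jet P φ j x) - uSubA P (jet P ψ j x)‖ := by
        rw [uSubA_jet, uSubA_jet, ← WithLp.toLp_sub, ← vnorm_eq_norm_toLp]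
        rfl
    _ ≤ L * ‖jet P φ j x - jet P ψ j x‖ := hL x (subset_closure hx)
    _ ≤ L * _ := mul_le_mul_of_nonneg_left hjet L.2
    _ ≤ (L + 1) * _ := mul_le_mul_of_nonneg_right (by simp) ((norm_nonneg _).trans hjet)

/-- (Lemma 2.4 of the paper.)
For two smooth maps `φ, φ̃` with corresponding variables `u_j, v_j, A_j` and
`ũ_j, ṽ_j, Ã_j`, and `0 ≤ j ≤ k-3`, on any open set `D` with compact closure
contained in the chart domain `U` there exists `C > 0` with
`|(u_{j+1} - A_{j+1}) - (ũ_{j+1} - Ã_{j+1})|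
  ≤ C(|φ-φ̃| + |dφ-dφ̃| + |u₀-ũ₀| + |u_j-ũ_j| + |u_{j+1}-ũ_{j+1}| + |v_j-ṽ_j|)`. -/
theorem estimate_u_minus_A_difference
    {m n : ℕ} (P : ChartData m n)
    (hPdom : P.SmoothDomain) (hPtar : P.SmoothTarget)
    (U : Set (Fin m → ℝ)) (hUopen : IsOpen U)
    (φ ψ : (Fin m → ℝ) → Fin n → ℝ)
    (hφ : ContDiff ℝ (⊤ : ℕ∞) φ) (hψ : ContDiff ℝ (⊤ : ℕ∞) ψ)
    (k : ℕ) (hk : 3 ≤ k) (j : ℕ) (hj : j ≤ k - 3)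
    (D : Set (Fin m → ℝ)) (hDopen : IsOpen D) (hDcpt : IsCompact (closure D))
    (hDsub : closure D ⊆ U) :
    ∃ C > 0, ∀ x ∈ D,
      vnorm (fun α : Fin n =>
          (uvar P φ (j+1) x α - Asec P φ (uvar P φ j) x α)
            - (uvar P ψ (j+1) x α - Asec P ψ (uvar P ψ j) x α))
        ≤ C * (vnorm (fun α : Fin n => φ x α - ψ x α)
          + vnorm (fun p : Fin m × Fin n => dphi φ x p.1 p.2 - dphi ψ x p.1 p.2)
          + vnorm (fun α : Fin n => uvar P φ 0 x α - uvar P ψ 0 x α)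
          + vnorm (fun α : Fin n => uvar P φ j x α - uvar P ψ j x α)
          + vnorm (fun α : Fin n => uvar P φ (j+1) x α - uvar P ψ (j+1) x α)
          + vnorm (fun p : Fin m × Fin n => vvar P φ j x p.1 p.2 - vvar P ψ j x p.1 p.2)) :=
  estimate_u_minus_A_difference_general P hPdom hPtar φ ψ hφ hψ j D hDcpt

end Polyharm
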